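/- arXiv:2510.23537 — 3 statements merged into one kernel-verified Lean document; each statement's English description precedes it below -/
import Mathlib

section
/- Let q^i : ℝ^d → ℝ^d be measurable and bounded for i = 1,…,N, let m = m¹ ⊗ ⋯ ⊗ m^N be a product probability measure on (ℝ^d)^N with finite second moments, and let f : (ℝ^d)^N → ℝ be C¹ and convex in each variable. Suppose ǎ = (ǎ^1,…,ǎ^N), with ǎ^i : ℝ^d → ℝ^d, satisfies the fixed-point relation ǎ^i(x) = -N q^i(x) - N ∫ ∂_i f(ǎ^i(x), (ǎ^j(y^j))_{j≠i}) ∏_{j≠i} m^j(dy^j) for all x ∈ ℝ^d. Then for all x, x̃ ∈ ℝ^d and each i, |ǎ^i(x) - ǎ^i(x̃)| ≤ N |q^i(x) - q^i(x̃)|. -/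
/-!
Subtracting the fixed-point relation at `x` and at `x̃` gives
`Δ + N (I(x) - I(x̃)) = -N (qⁱ(x) - qⁱ(x̃))`, where `Δ = ǎⁱ(x) - ǎⁱ(x̃)` and `I` is the averaged
partial gradient. Convexity of `f` in its `i`-th variable makes `∂ᵢ f` monotone there, so
`⟪Δ, I(x) - I(x̃)⟫ ≥ 0`, and adding a vector with nonnegative inner product cannot shorten `Δ`.
-/

open MeasureTheory Set
open scoped InnerProductSpace

section Gradient

variable {E : Type*} [NormedAddCommGroup E] [InnerProductSpace ℝ E] [CompleteSpace E]

lemma HasGradientAt.hasDerivAt_comp_lineMap {g : E → ℝ} {g' u v : E} {t : ℝ}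
    (h : HasGradientAt g g' (AffineMap.lineMap u v t)) :
    HasDerivAt (fun s : ℝ => g (AffineMap.lineMap u v s)) ⟪g', v - u⟫_ℝ t :=
  h.hasFDerivAt.comp_hasDerivAt t AffineMap.hasDerivAt_lineMap

theorem ConvexOn.inner_sub_gradient_nonneg {g : E → ℝ} (hg : ConvexOn ℝ univ g)
    {u v gu gv : E} (hu : HasGradientAt g gu u) (hv : HasGradientAt g gv v) :
    0 ≤ ⟪u - v, gu - gv⟫_ℝ := by
  -- On the segment from `v` to `u`, the chord slope lies between the two endpoint derivatives.
  have hline : ConvexOn ℝ univ (fun t : ℝ => g (AffineMap.lineMap v u t)) :=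
    hg.comp_affineMap (AffineMap.lineMap v u)
  have h0 := HasGradientAt.hasDerivAt_comp_lineMap (u := v) (v := u) (t := 0) (by simpa using hv)
  have h1 := HasGradientAt.hasDerivAt_comp_lineMap (u := v) (v := u) (t := 1) (by simpa using hu)
  have hslope := (hline.le_slope_of_hasDerivAt trivial trivial one_pos h0).trans
    (hline.slope_le_of_hasDerivAt trivial trivial one_pos h1)
  rw [inner_sub_right, real_inner_comm gu, real_inner_comm gv]
  linarith

end Gradient

theorem norm_le_norm_add_smul_of_inner_nonneg {F : Type*} [NormedAddCommGroup F]
    [InnerProductSpace ℝ F] {x y : F} {c : ℝ} (hc : 0 ≤ c) (h : 0 ≤ ⟪x, y⟫_ℝ) :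
    ‖x‖ ≤ ‖x + c • y‖ := by
  refine (pow_le_pow_iff_left₀ (norm_nonneg _) (norm_nonneg _) two_ne_zero).mp ?_
  rw [norm_add_sq_real, real_inner_smul_right]
  nlinarith [sq_nonneg ‖c • y‖]

theorem inner_integral_nonneg {α E : Type*} [MeasurableSpace α] {μ : Measure α}
    [NormedAddCommGroup E] [InnerProductSpace ℝ E] [CompleteSpace E] {F : α → E}
    (hF : Integrable F μ) {v : E} (h : ∀ᵐ a ∂μ, 0 ≤ ⟪v, F a⟫_ℝ) :
    0 ≤ ⟪v, ∫ a, F a ∂μ⟫_ℝ := by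
  rw [← integral_inner hF]
  exact integral_nonneg_of_ae h

theorem stmt4_general (N d : ℕ)
    (q : Fin N → EuclideanSpace ℝ (Fin d) → EuclideanSpace ℝ (Fin d))
    (μ : Fin N → Measure (EuclideanSpace ℝ (Fin d)))
    (f : (Fin N → EuclideanSpace ℝ (Fin d)) → ℝ)
    (Df : (Fin N → EuclideanSpace ℝ (Fin d)) → Fin N → EuclideanSpace ℝ (Fin d))
    (hgrad : ∀ (a : Fin N → EuclideanSpace ℝ (Fin d)) (i : Fin N),
      HasGradientAt (fun u => f (Function.update a i u)) (Df a i) (a i))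
    (hconvi : ∀ (i : Fin N) (a : Fin N → EuclideanSpace ℝ (Fin d)),
      ConvexOn ℝ Set.univ (fun u => f (Function.update a i u)))
    (acheck : Fin N → EuclideanSpace ℝ (Fin d) → EuclideanSpace ℝ (Fin d))
    (hint : ∀ i x, Integrable (fun y : Fin N → EuclideanSpace ℝ (Fin d) =>
      Df (Function.update (fun j => acheck j (y j)) i (acheck i x)) i) (Measure.pi μ))
    (hfix : ∀ i x, acheck i x = -((N : ℝ) • q i x) - (N : ℝ) •
      ∫ y, Df (Function.update (fun j => acheck j (y j)) i (acheck i x)) i ∂(Measure.pi μ))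
    (x xt : EuclideanSpace ℝ (Fin d)) (i : Fin N) :
    ‖acheck i x - acheck i xt‖ ≤ (N : ℝ) * ‖q i x - q i xt‖ := by
  have hpartial : ∀ (b : Fin N → EuclideanSpace ℝ (Fin d)) u,
      HasGradientAt (fun v => f (Function.update b i v)) (Df (Function.update b i u) i) u :=
    fun b u => by simpa using hgrad (Function.update b i u) i
  set I := fun z => (∫ y, Df (Function.update (fun j => acheck j (y j)) i z) i ∂(Measure.pi μ))
  have hmono : 0 ≤ ⟪acheck i x - acheck i xt, I (acheck i x) - I (acheck i xt)⟫_ℝ := by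
    rw [← integral_sub (hint i x) (hint i xt)]
    exact inner_integral_nonneg ((hint i x).sub (hint i xt)) (.of_forall fun y =>
      (hconvi i _).inner_sub_gradient_nonneg (hpartial _ _) (hpartial _ _))
  have hsum : acheck i x - acheck i xt + (N : ℝ) • (I (acheck i x) - I (acheck i xt)) =
      -((N : ℝ) • (q i x - q i xt)) := by
    linear_combination (norm := module) hfix i x - hfix i xt
  calc ‖acheck i x - acheck i xt‖
      ≤ ‖acheck i x - acheck i xt + (N : ℝ) • (I (acheck i x) - I (acheck i xt))‖ :=
        norm_le_norm_add_smul_of_inner_nonneg N.cast_nonneg hmono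
    _ = N * ‖q i x - q i xt‖ := by rw [hsum, norm_neg, norm_smul, Real.norm_natCast]

/-- Lipschitz estimate for a distributed control `ǎ` defined through a
mean-field fixed-point relation.  `f` is `C¹` and convex in each `ℝ^d`-block, with
block gradients `Df · i`; `m = m¹ ⊗ ⋯ ⊗ m^N` is a product probability measure with
finite second moments; and `ǎⁱ` satisfies
`ǎⁱ(x) = -N qⁱ(x) - N ∫ ∂ᵢ f(ǎⁱ(x), (ǎʲ(yʲ))_{j≠i}) m^{-i}(dy^{-i})`. -/
theorem stmt4 (N d : ℕ) (hN : 0 < N)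
    (q : Fin N → EuclideanSpace ℝ (Fin d) → EuclideanSpace ℝ (Fin d))
    (hqmeas : ∀ i, Measurable (q i)) (hqbdd : ∀ i, ∃ B, ∀ x, ‖q i x‖ ≤ B)
    (μ : Fin N → Measure (EuclideanSpace ℝ (Fin d)))
    (hprob : ∀ i, IsProbabilityMeasure (μ i))
    (hmom : ∀ i, Integrable (fun x : EuclideanSpace ℝ (Fin d) => ‖x‖ ^ 2) (μ i))
    (f : (Fin N → EuclideanSpace ℝ (Fin d)) → ℝ) (hf : ContDiff ℝ 1 f)
    (Df : (Fin N → EuclideanSpace ℝ (Fin d)) → Fin N → EuclideanSpace ℝ (Fin d))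
    (hgrad : ∀ (a : Fin N → EuclideanSpace ℝ (Fin d)) (i : Fin N),
      HasGradientAt (fun u => f (Function.update a i u)) (Df a i) (a i))
    (hconvi : ∀ (i : Fin N) (a : Fin N → EuclideanSpace ℝ (Fin d)),
      ConvexOn ℝ Set.univ (fun u => f (Function.update a i u)))
    (acheck : Fin N → EuclideanSpace ℝ (Fin d) → EuclideanSpace ℝ (Fin d))
    (hmeas : ∀ i, Measurable (acheck i))
    (hint : ∀ i x, Integrable (fun y : Fin N → EuclideanSpace ℝ (Fin d) =>
      Df (Function.update (fun j => acheck j (y j)) i (acheck i x)) i) (Measure.pi μ))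
    (hfix : ∀ i x, acheck i x = -((N : ℝ) • q i x) - (N : ℝ) •
      ∫ y, Df (Function.update (fun j => acheck j (y j)) i (acheck i x)) i ∂(Measure.pi μ))
    (x xt : EuclideanSpace ℝ (Fin d)) (i : Fin N) :
    ‖acheck i x - acheck i xt‖ ≤ (N : ℝ) * ‖q i x - q i xt‖ :=
  stmt4_general N d q μ f Df hgrad hconvi acheck hint hfix x xt i
end

section
/- Let f : (ℝ^d)^N → ℝ be C¹ and convex. Let m = m¹ ⊗ ⋯ ⊗ m^N be a product probability measure. Suppose â : (ℝ^d)^N → (ℝ^d)^N satisfies â^i(x) = -N p^i(x^i) - N ∂_i f(â(x)), and ǎ^i : ℝ^d → ℝ^d satisfies ǎ^i(x^i) = -N p^i(x^i) - N ∫ ∂_i f(ǎ^i(x^i), (ǎ^j(y^j))_{j≠i}) m^{-i}(dy^{-i}). Then A := ∫ ∑_i |â^i(x) - ǎ^i(x^i)|² m(dx) satisfies A ≤ N² ∫ ∑_i |∂_i f(ǎ(x)) - ∫ ∂_i f(ǎ^i(x^i), ǎ^{-i}(y^{-i})) m^{-i}(dy^{-i})|² m(dx). -/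
open MeasureTheory
open scoped RealInnerProductSpace BigOperators

/-- comparison of the full-information optimizer `â` and the
distributed optimizer `ǎ`, both defined by fixed-point relations, under a product
measure `m = m¹ ⊗ ⋯ ⊗ m^N`.  The quantity
`A := ∫ ∑ᵢ |âⁱ(x) - ǎⁱ(xⁱ)|² m(dx)` is bounded by
`N² ∫ ∑ᵢ |∂ᵢf(ǎ(x)) - ∫ ∂ᵢf(ǎⁱ(xⁱ), ǎ^{-i}(y^{-i})) m^{-i}(dy^{-i})|² m(dx)`. -/
theorem stmt9 (N d : ℕ) (hN : 0 < N)
    (f : (Fin N → EuclideanSpace ℝ (Fin d)) → ℝ) (hf : ContDiff ℝ 1 f)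
    (Df : (Fin N → EuclideanSpace ℝ (Fin d)) → Fin N → EuclideanSpace ℝ (Fin d))
    (hconv : ∀ a b : Fin N → EuclideanSpace ℝ (Fin d),
      f a + ∑ i, ⟪Df a i, b i - a i⟫ ≤ f b)
    (hgrad : ∀ (a : Fin N → EuclideanSpace ℝ (Fin d)) (i : Fin N),
      HasGradientAt (fun u => f (Function.update a i u)) (Df a i) (a i))
    (μ : Fin N → Measure (EuclideanSpace ℝ (Fin d)))
    (hprob : ∀ i, IsProbabilityMeasure (μ i))
    (p : Fin N → EuclideanSpace ℝ (Fin d) → EuclideanSpace ℝ (Fin d))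
    (ahat : (Fin N → EuclideanSpace ℝ (Fin d)) → Fin N → EuclideanSpace ℝ (Fin d))
    (acheck : Fin N → EuclideanSpace ℝ (Fin d) → EuclideanSpace ℝ (Fin d))
    (hhat : ∀ x i, ahat x i = -((N : ℝ) • p i (x i)) - (N : ℝ) • Df (ahat x) i)
    (hcheck : ∀ i xi, acheck i xi = -((N : ℝ) • p i xi) - (N : ℝ) •
      ∫ y, Df (Function.update (fun j => acheck j (y j)) i (acheck i xi)) i ∂(Measure.pi μ))
    (hint1 : Integrable (fun x : Fin N → EuclideanSpace ℝ (Fin d) =>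
      ∑ i, ‖ahat x i - acheck i (x i)‖ ^ 2) (Measure.pi μ))
    (hint2 : ∀ i xi, Integrable (fun y : Fin N → EuclideanSpace ℝ (Fin d) =>
      Df (Function.update (fun j => acheck j (y j)) i (acheck i xi)) i) (Measure.pi μ))
    (hint3 : Integrable (fun x : Fin N → EuclideanSpace ℝ (Fin d) =>
      ∑ i, ‖Df (fun j => acheck j (x j)) i
        - ∫ y, Df (Function.update (fun j => acheck j (y j)) i (acheck i (x i))) i
            ∂(Measure.pi μ)‖ ^ 2) (Measure.pi μ)) :
    ∫ x, ∑ i, ‖ahat x i - acheck i (x i)‖ ^ 2 ∂(Measure.pi μ)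
      ≤ (N : ℝ) ^ 2 * ∫ x, ∑ i, ‖Df (fun j => acheck j (x j)) i
          - ∫ y, Df (Function.update (fun j => acheck j (y j)) i (acheck i (x i))) i
              ∂(Measure.pi μ)‖ ^ 2 ∂(Measure.pi μ) := by

  have key : ∀ x : Fin N → EuclideanSpace ℝ (Fin d),
      ∑ i, ‖ahat x i - acheck i (x i)‖ ^ 2 ≤
        (N : ℝ) ^ 2 * ∑ i, ‖Df (fun j => acheck j (x j)) i
          - ∫ y, Df (Function.update (fun j => acheck j (y j)) i (acheck i (x i))) i
              ∂(Measure.pi μ)‖ ^ 2 := by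
    intro x
    set u : Fin N → EuclideanSpace ℝ (Fin d) := ahat x with hu
    set v : Fin N → EuclideanSpace ℝ (Fin d) := fun j => acheck j (x j) with hv
    set g : Fin N → EuclideanSpace ℝ (Fin d) := fun i =>
      ∫ y, Df (Function.update (fun j => acheck j (y j)) i (acheck i (x i))) i
        ∂(Measure.pi μ) with hg
    have he : ∀ i, u i - v i = -((N : ℝ) • (Df u i - g i)) := by
      intro i
      have h1 : u i = -((N : ℝ) • p i (x i)) - (N : ℝ) • Df u i := hhat x i
      have h2 : v i = -((N : ℝ) • p i (x i)) - (N : ℝ) • g i := hcheck i (x i)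
      rw [h1, h2]
      module
    -- monotonicity
    have hmono : 0 ≤ ∑ i, ⟪u i - v i, Df u i - Df v i⟫ := by
      have h1 := hconv u v
      have h2 := hconv v u
      have heq : ∀ i, ⟪u i - v i, Df u i - Df v i⟫ =
          -(⟪Df u i, v i - u i⟫ + ⟪Df v i, u i - v i⟫) := by
        intro i
        rw [real_inner_comm]
        simp only [inner_sub_left, inner_sub_right]
        ring
      rw [Finset.sum_congr rfl fun i _ => heq i, Finset.sum_neg_distrib,
        Finset.sum_add_distrib]
      linarith
    set S : ℝ := ∑ i, ‖u i - v i‖ ^ 2 with hS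
    set T : ℝ := ∑ i, ‖Df v i - g i‖ ^ 2 with hT
    have hSnn : 0 ≤ S := Finset.sum_nonneg fun i _ => sq_nonneg _
    have hTnn : 0 ≤ T := Finset.sum_nonneg fun i _ => sq_nonneg _
    set c : ℝ := ∑ i, ‖u i - v i‖ * ‖Df v i - g i‖ with hc
    have hcnn : 0 ≤ c := Finset.sum_nonneg fun i _ =>
      mul_nonneg (norm_nonneg _) (norm_nonneg _)
    have hcs : c ^ 2 ≤ S * T := by
      simpa [hc, hS, hT] using
        Finset.sum_mul_sq_le_sq_mul_sq Finset.univ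
          (fun i => ‖u i - v i‖) (fun i => ‖Df v i - g i‖)
    have hmain : S ≤ (N : ℝ) * c := by
      have hexp : ∀ i, ‖u i - v i‖ ^ 2 =
          -((N : ℝ) * ⟪u i - v i, Df u i - Df v i⟫)
          - (N : ℝ) * ⟪u i - v i, Df v i - g i⟫ := by
        intro i
        have : (‖u i - v i‖ : ℝ) ^ 2 = ⟪u i - v i, u i - v i⟫ :=
          (real_inner_self_eq_norm_sq _).symm
        rw [this]
        nth_rewrite 2 [he i]
        rw [inner_neg_right, inner_smul_right]
        have : (Df u i - g i) = (Df u i - Df v i) + (Df v i - g i) := by abel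
        rw [this, inner_add_right]
        ring
      have hsum : S = -((N : ℝ) * ∑ i, ⟪u i - v i, Df u i - Df v i⟫)
          - (N : ℝ) * ∑ i, ⟪u i - v i, Df v i - g i⟫ := by
        rw [hS, Finset.sum_congr rfl fun i _ => hexp i, Finset.sum_sub_distrib,
          Finset.sum_neg_distrib, ← Finset.mul_sum, ← Finset.mul_sum]
      have hterm : -(∑ i, ⟪u i - v i, Df v i - g i⟫) ≤ c := by
        rw [← Finset.sum_neg_distrib]
        apply Finset.sum_le_sum
        intro i _
        calc -⟪u i - v i, Df v i - g i⟫ ≤ |⟪u i - v i, Df v i - g i⟫| := neg_le_abs _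
          _ ≤ ‖u i - v i‖ * ‖Df v i - g i‖ := abs_real_inner_le_norm _ _
      have hNnn : (0 : ℝ) ≤ (N : ℝ) := Nat.cast_nonneg N
      have := mul_le_mul_of_nonneg_left hterm hNnn
      nlinarith [mul_nonneg hNnn hmono]
    -- conclude S ≤ N^2 * T
    have hST : S ≤ (N : ℝ) ^ 2 * T := by
      rcases eq_or_lt_of_le hSnn with h0 | h0
      · rw [← h0]; positivity
      · have h1 : S ^ 2 ≤ (N : ℝ) ^ 2 * (S * T) := by nlinarith
        nlinarith
    simpa [hS, hT] using hST
  calc ∫ x, ∑ i, ‖ahat x i - acheck i (x i)‖ ^ 2 ∂(Measure.pi μ)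
      ≤ ∫ x, (N : ℝ) ^ 2 * ∑ i, ‖Df (fun j => acheck j (x j)) i
          - ∫ y, Df (Function.update (fun j => acheck j (y j)) i (acheck i (x i))) i
              ∂(Measure.pi μ)‖ ^ 2 ∂(Measure.pi μ) :=
        integral_mono hint1 (hint3.const_mul _) key
    _ = _ := integral_const_mul _ _
end

section
/- Let H : (ℝ^d)^N → ℝ be defined by H(p) = sup_{a ∈ (ℝ^d)^N} [-∑_i (p^i·a^i + |a^i|²/(2N)) - f(a)], where f is convex, C¹, and such that the sup is attained at â(p) satisfying â^i(p) = -Np^i - N ∂_i f(â(p)). Then the function φ(p) := N|p|² - H(p) is convex on (ℝ^d)^N. -/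
open scoped RealInnerProductSpace BigOperators

/-- the function `φ(p) = N|p|² - H(p)` is convex, where
`H(p) = sup_a [-∑ᵢ (⟪pⁱ, aⁱ⟫ + ‖aⁱ‖²/(2N)) - f(a)]` with convex differentiable
`f`, the sup being attained at `â(p)` satisfying `âⁱ(p) = -Npⁱ - N ∂ᵢf(â(p))`. -/
theorem stmt10 (N d : ℕ) (hN : 0 < N)
    (f : (Fin N → EuclideanSpace ℝ (Fin d)) → ℝ)
    (Df : (Fin N → EuclideanSpace ℝ (Fin d)) → Fin N → EuclideanSpace ℝ (Fin d))
    (hconv : ∀ a b : Fin N → EuclideanSpace ℝ (Fin d),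
      f a + ∑ i, ⟪Df a i, b i - a i⟫ ≤ f b)
    (H : (Fin N → EuclideanSpace ℝ (Fin d)) → ℝ)
    (ahat : (Fin N → EuclideanSpace ℝ (Fin d)) → Fin N → EuclideanSpace ℝ (Fin d))
    (hHub : ∀ p a : Fin N → EuclideanSpace ℝ (Fin d),
      -∑ i, (⟪p i, a i⟫ + ‖a i‖ ^ 2 / (2 * N)) - f a ≤ H p)
    (hHeq : ∀ p : Fin N → EuclideanSpace ℝ (Fin d),
      H p = -∑ i, (⟪p i, ahat p i⟫ + ‖ahat p i‖ ^ 2 / (2 * N)) - f (ahat p))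
    (hfix : ∀ p i, ahat p i = -((N : ℝ) • p i) - (N : ℝ) • Df (ahat p) i) :
    ConvexOn ℝ Set.univ
      (fun p : Fin N → EuclideanSpace ℝ (Fin d) => (N : ℝ) * ∑ i, ‖p i‖ ^ 2 - H p) := by
  have hN' : (0:ℝ) < N := by exact_mod_cast hN
  set φ : (Fin N → EuclideanSpace ℝ (Fin d)) → ℝ :=
    fun p => (N:ℝ) * ∑ i, ‖p i‖ ^ 2 - H p with hφ
  -- monotonicity of Df
  have mono : ∀ a b : Fin N → EuclideanSpace ℝ (Fin d),
      0 ≤ ∑ i, ⟪Df a i - Df b i, a i - b i⟫ := by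
    intro a b
    have h1 := hconv a b
    have h2 := hconv b a
    have hpt : ∀ i, ⟪Df a i - Df b i, a i - b i⟫
        = -(⟪Df a i, b i - a i⟫ + ⟪Df b i, a i - b i⟫) := by
      intro i
      have : a i - b i = -(b i - a i) := by abel
      rw [inner_sub_left, this, inner_neg_right, inner_neg_right]
      ring
    have hs : ∑ i, ⟪Df a i - Df b i, a i - b i⟫
        = -(∑ i, ⟪Df a i, b i - a i⟫ + ∑ i, ⟪Df b i, a i - b i⟫) := by
      rw [← Finset.sum_add_distrib, ← Finset.sum_neg_distrib]
      exact Finset.sum_congr rfl fun i _ => hpt i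
    rw [hs]; linarith
  -- Lipschitz-type estimate on ahat
  have est : ∀ p q : Fin N → EuclideanSpace ℝ (Fin d),
      -((N:ℝ) * ∑ i, ‖p i - q i‖ ^ 2) ≤ ∑ i, ⟪ahat p i - ahat q i, p i - q i⟫ := by
    intro p q
    set w : Fin N → EuclideanSpace ℝ (Fin d) := fun i => Df (ahat p) i - Df (ahat q) i with hw
    have hu : ∀ i, ahat p i - ahat q i = (-(N:ℝ)) • (p i - q i) + (-(N:ℝ)) • w i := by
      intro i
      rw [hfix p i, hfix q i, hw]
      module
    have hA : ∑ i, ⟪w i, ahat p i - ahat q i⟫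
        = -(N:ℝ) * ∑ i, ⟪w i, p i - q i⟫ - (N:ℝ) * ∑ i, ‖w i‖ ^ 2 := by
      have : ∀ i, ⟪w i, ahat p i - ahat q i⟫
          = -(N:ℝ) * ⟪w i, p i - q i⟫ - (N:ℝ) * ‖w i‖ ^ 2 := by
        intro i
        rw [hu i, inner_add_right, real_inner_smul_right, real_inner_smul_right,
          real_inner_self_eq_norm_sq]
        ring
      rw [Finset.sum_congr rfl fun i _ => this i, Finset.sum_sub_distrib,
        ← Finset.mul_sum, ← Finset.mul_sum]
    have hmono : 0 ≤ ∑ i, ⟪w i, ahat p i - ahat q i⟫ := by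
      have := mono (ahat p) (ahat q)
      have heq : ∑ i, ⟪Df (ahat p) i - Df (ahat q) i, ahat p i - ahat q i⟫
          = ∑ i, ⟪w i, ahat p i - ahat q i⟫ := rfl
      linarith [this, heq ▸ this]
    have hB : (0:ℝ) ≤ ∑ i, ‖w i‖ ^ 2 :=
      Finset.sum_nonneg fun i _ => by positivity
    have hwv : ∑ i, ⟪w i, p i - q i⟫ ≤ 0 := by
      nlinarith [hmono, hA, hB]
    have hC : ∑ i, ⟪ahat p i - ahat q i, p i - q i⟫
        = -(N:ℝ) * ∑ i, ‖p i - q i‖ ^ 2 - (N:ℝ) * ∑ i, ⟪w i, p i - q i⟫ := by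
      have : ∀ i, ⟪ahat p i - ahat q i, p i - q i⟫
          = -(N:ℝ) * ‖p i - q i‖ ^ 2 - (N:ℝ) * ⟪w i, p i - q i⟫ := by
        intro i
        rw [hu i, inner_add_left, real_inner_smul_left, real_inner_smul_left,
          real_inner_self_eq_norm_sq]
        ring
      rw [Finset.sum_congr rfl fun i _ => this i, Finset.sum_sub_distrib,
        ← Finset.mul_sum, ← Finset.mul_sum]
    nlinarith [hC, hwv]
  -- difference bound on H
  have Hdiff : ∀ p q : Fin N → EuclideanSpace ℝ (Fin d),
      H q - H p ≤ ∑ i, ⟪p i - q i, ahat q i⟫ := by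
    intro p q
    have h1 := hHub p (ahat q)
    rw [hHeq q]
    have hsplit : ∀ r : Fin N → EuclideanSpace ℝ (Fin d),
        ∑ i, (⟪r i, ahat q i⟫ + ‖ahat q i‖ ^ 2 / (2 * N))
          = ∑ i, ⟪r i, ahat q i⟫ + ∑ i, ‖ahat q i‖ ^ 2 / (2 * N) :=
      fun r => Finset.sum_add_distrib
    have hsub : ∑ i, ⟪p i - q i, ahat q i⟫
        = ∑ i, ⟪p i, ahat q i⟫ - ∑ i, ⟪q i, ahat q i⟫ := by
      rw [← Finset.sum_sub_distrib]
      exact Finset.sum_congr rfl fun i _ => inner_sub_left _ _ _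
    rw [hsplit p] at h1
    rw [hsplit q, hsub]
    linarith
  -- subgradient inequality for φ
  have subgrad : ∀ p q : Fin N → EuclideanSpace ℝ (Fin d),
      φ p + ∑ i, ⟪(2*(N:ℝ)) • p i + ahat p i, q i - p i⟫ ≤ φ q := by
    intro p q
    have hHd := Hdiff p q
    -- norm expansion
    have hnorm : ∑ i, ‖q i‖ ^ 2 - ∑ i, ‖p i‖ ^ 2
        = ∑ i, ‖q i - p i‖ ^ 2 + 2 * ∑ i, ⟪p i, q i - p i⟫ := by
      have : ∀ i, ‖q i‖ ^ 2 - ‖p i‖ ^ 2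
          = ‖q i - p i‖ ^ 2 + 2 * ⟪p i, q i - p i⟫ := by
        intro i
        have h := @norm_sub_sq_real (EuclideanSpace ℝ (Fin d)) _ _ (q i) (p i)
        rw [inner_sub_right]
        have hc : ⟪p i, q i⟫ = ⟪q i, p i⟫ := real_inner_comm _ _
        rw [real_inner_self_eq_norm_sq] at *
        nlinarith [h, hc]
      have hs := Finset.sum_congr rfl fun i (_ : i ∈ Finset.univ) => this i
      rw [Finset.sum_sub_distrib] at hs
      rw [hs, Finset.sum_add_distrib, ← Finset.mul_sum]
    -- expand the subgradient sum
    have hexp : ∑ i, ⟪(2*(N:ℝ)) • p i + ahat p i, q i - p i⟫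
        = 2*(N:ℝ) * ∑ i, ⟪p i, q i - p i⟫ + ∑ i, ⟪ahat p i, q i - p i⟫ := by
      have : ∀ i, ⟪(2*(N:ℝ)) • p i + ahat p i, q i - p i⟫
          = 2*(N:ℝ) * ⟪p i, q i - p i⟫ + ⟪ahat p i, q i - p i⟫ := by
        intro i
        rw [inner_add_left, real_inner_smul_left]
      rw [Finset.sum_congr rfl fun i _ => this i, Finset.sum_add_distrib, ← Finset.mul_sum]
    -- relate ⟪p - q, ahat q⟫ to ⟪ahat p, q - p⟫
    have hswap : ∑ i, ⟪p i - q i, ahat q i⟫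
        = -(∑ i, ⟪ahat p i, q i - p i⟫) - ∑ i, ⟪ahat q i - ahat p i, q i - p i⟫ := by
      have : ∀ i, ⟪p i - q i, ahat q i⟫
          = -(⟪ahat p i, q i - p i⟫) - ⟪ahat q i - ahat p i, q i - p i⟫ := by
        intro i
        simp only [inner_sub_left, inner_sub_right]
        rw [real_inner_comm (p i) (ahat q i), real_inner_comm (q i) (ahat q i)]
        ring
      rw [Finset.sum_congr rfl fun i _ => this i, Finset.sum_sub_distrib,
        ← Finset.sum_neg_distrib]
    have hest := est q p
    have hflip : ∑ i, ⟪ahat q i - ahat p i, q i - p i⟫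
        = ∑ i, ⟪ahat q i - ahat p i, q i - p i⟫ := rfl
    -- combine everything
    simp only [hφ]
    rw [hexp]
    rw [hswap] at hHd
    nlinarith [hHd, hnorm, hest, mul_pos hN' hN']
  -- conclude convexity from the subgradient inequality
  refine ⟨convex_univ, ?_⟩
  intro p _ q _ t s ht hs hts
  set m : Fin N → EuclideanSpace ℝ (Fin d) := t • p + s • q with hm
  have h1 := subgrad m p
  have h2 := subgrad m q
  have hzero : t * (∑ i, ⟪(2*(N:ℝ)) • m i + ahat m i, p i - m i⟫)
      + s * (∑ i, ⟪(2*(N:ℝ)) • m i + ahat m i, q i - m i⟫) = 0 := by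
    rw [Finset.mul_sum, Finset.mul_sum, ← Finset.sum_add_distrib]
    refine Finset.sum_eq_zero fun i _ => ?_
    have hmi : m i = t • p i + s • q i := rfl
    have hcomb : t • (p i - m i) + s • (q i - m i) = (0 : EuclideanSpace ℝ (Fin d)) := by
      have hs' : s = 1 - t := by linarith
      rw [hmi, hs']
      module
    have : t * ⟪(2*(N:ℝ)) • m i + ahat m i, p i - m i⟫
        + s * ⟪(2*(N:ℝ)) • m i + ahat m i, q i - m i⟫
        = ⟪(2*(N:ℝ)) • m i + ahat m i, t • (p i - m i) + s • (q i - m i)⟫ := by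
      rw [inner_add_right, real_inner_smul_right, real_inner_smul_right]
    rw [this, hcomb, inner_zero_right]
  have hmul1 := mul_le_mul_of_nonneg_left h1 ht
  have hmul2 := mul_le_mul_of_nonneg_left h2 hs
  show φ (t • p + s • q) ≤ t * φ p + s * φ q
  rw [← hm]
  have hφm : t * φ m + s * φ m = φ m := by rw [← add_mul, hts, one_mul]
  linarith [hmul1, hmul2, hzero, hφm]
end
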